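/- The exterior Abelian integrals I₀ and I₂ are differentiable on (0, ∞) and satisfy the Picard–Fuchs system: for every h > 0, I₀(h) = (4/3)·h·I₀'(h) + (1/3)·I₂'(h) and I₂(h) = (4/15)·h·I₀'(h) + (4h/5 + 4/15)·I₂'(h). -/

import Mathlib

open MeasureTheory

/-- Endpoint `a(h) = √(1 + √(1+4h))` of the exterior oval of the Duffing Hamiltonian
`H(x,y) = y²/2 − x²/2 + x⁴/4`. -/
noncomputable def aext (h : ℝ) : ℝ := Real.sqrt (1 + Real.sqrt (1 + 4*h))

/-- The exterior Abelian integrals `I_i(h) = 2∫_{−a(h)}^{a(h)} xⁱ √(2h + x² − x⁴/2) dx`. -/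
noncomputable def Iext (i : ℕ) (h : ℝ) : ℝ :=
  2 * ∫ x in (-aext h)..aext h, x ^ i * Real.sqrt (2*h + x^2 - x^4/2)

open intervalIntegral Metric

noncomputable def Sfun (u t : ℝ) : ℝ := u/2 - 1 + u/2 * t^2

lemma Sfun_pos {u : ℝ} (hu : 2 < u) (t : ℝ) : 0 < Sfun u t := by
  have : (0:ℝ) ≤ u/2 * t^2 := by positivity
  unfold Sfun; nlinarith

lemma sqrtS_pos {u : ℝ} (hu : 2 < u) (t : ℝ) : 0 < Real.sqrt (Sfun u t) :=
  Real.sqrt_pos.mpr (Sfun_pos hu t)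

lemma sqrtS_ne {u : ℝ} (hu : 2 < u) (t : ℝ) : Real.sqrt (Sfun u t) ≠ 0 :=
  ne_of_gt (sqrtS_pos hu t)

lemma contSfun (u : ℝ) : Continuous (Sfun u) := by
  unfold Sfun; continuity

noncomputable def Aint (i : ℕ) (u : ℝ) : ℝ :=
  ∫ t in (-1:ℝ)..1, t^i * (Real.sqrt (1-t^2) * Real.sqrt (Sfun u t))

noncomputable def Dint (i : ℕ) (u : ℝ) : ℝ :=
  ∫ t in (-1:ℝ)..1, t^i * (Real.sqrt (1-t^2) / Real.sqrt (Sfun u t))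

lemma contA (i : ℕ) (u : ℝ) :
    Continuous (fun t : ℝ => t^i * (Real.sqrt (1-t^2) * Real.sqrt (Sfun u t))) := by
  apply Continuous.mul (by continuity)
  exact ((Real.continuous_sqrt.comp (by continuity)).mul
    (Real.continuous_sqrt.comp (contSfun u)))

lemma contD (i : ℕ) {u : ℝ} (hu : 2 < u) :
    Continuous (fun t : ℝ => t^i * (Real.sqrt (1-t^2) / Real.sqrt (Sfun u t))) := by
  apply Continuous.mul (by continuity)
  exact (Real.continuous_sqrt.comp (by continuity)).div
    (Real.continuous_sqrt.comp (contSfun u)) (fun t => sqrtS_ne hu t)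

lemma intD (i : ℕ) {u : ℝ} (hu : 2 < u) :
    IntervalIntegrable (fun t : ℝ => t^i * (Real.sqrt (1-t^2) / Real.sqrt (Sfun u t)))
      volume (-1) 1 := (contD i hu).intervalIntegrable _ _

lemma A_eq_D (i : ℕ) {u : ℝ} (hu : 2 < u) :
    Aint i u = (u/2-1) * Dint i u + u/2 * Dint (i+2) u := by
  have key : ∀ t : ℝ, t^i * (Real.sqrt (1-t^2) * Real.sqrt (Sfun u t))
      = (u/2-1) * (t^i * (Real.sqrt (1-t^2) / Real.sqrt (Sfun u t)))
        + u/2 * (t^(i+2) * (Real.sqrt (1-t^2) / Real.sqrt (Sfun u t))) := by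
    intro t
    have hQ := sqrtS_ne hu t
    have hQQ : Real.sqrt (Sfun u t) * Real.sqrt (Sfun u t) = Sfun u t :=
      Real.mul_self_sqrt (Sfun_pos hu t).le
    simp only [Sfun] at hQQ hQ ⊢
    have step : (u/2-1) * (t^i * (Real.sqrt (1-t^2)/Real.sqrt (u/2-1+u/2*t^2)))
        + u/2 * (t^(i+2) * (Real.sqrt (1-t^2)/Real.sqrt (u/2-1+u/2*t^2)))
        = ((u/2-1) * (t^i * Real.sqrt (1-t^2)) + u/2 * (t^(i+2) * Real.sqrt (1-t^2)))
          / Real.sqrt (u/2-1+u/2*t^2) := by ring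
    rw [step, eq_div_iff hQ, pow_add]
    linear_combination (t^i * Real.sqrt (1-t^2)) * hQQ
  unfold Aint
  rw [intervalIntegral.integral_congr (g := fun t =>
      (u/2-1) * (t^i * (Real.sqrt (1-t^2) / Real.sqrt (Sfun u t)))
        + u/2 * (t^(i+2) * (Real.sqrt (1-t^2) / Real.sqrt (Sfun u t)))) (fun t _ => key t),
    intervalIntegral.integral_add ((intD i hu).const_mul _) ((intD (i+2) hu).const_mul _),
    intervalIntegral.integral_const_mul, intervalIntegral.integral_const_mul]
  rfl
lemma gd_cont {u : ℝ} (hu : 2 < u) :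
    Continuous (fun t : ℝ =>
      (Real.sqrt (1-t^2)/Real.sqrt (Sfun u t)) * ((u/2-1) + (4-u)*t^2 - (5*u/2)*t^4)) := by
  apply Continuous.mul _ (by continuity)
  exact (Real.continuous_sqrt.comp (by continuity)).div
    (Real.continuous_sqrt.comp (contSfun u)) (fun t => sqrtS_ne hu t)

lemma deriv_combine {u t P Q : ℝ} (hP2 : P^2 = 1 - t^2) (hQ2 : Q^2 = Sfun u t)
    (hPne : P ≠ 0) (hQne : Q ≠ 0) :
    (1*P^3 + t*(3*P^2*((0-2*t)/(2*P))))*Q + (t*P^3)*((u*t)/(2*Q))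
      = (P/Q) * ((u/2-1) + (4-u)*t^2 - (5*u/2)*t^4) := by
  simp only [Sfun] at hQ2
  field_simp
  linear_combination (2*P^2-6*t^2) * hQ2 + (2*(u/2-1+u/2*t^2) + t^2*u) * hP2
lemma R1 {u : ℝ} (hu : 2 < u) :
    (u/2-1) * Dint 0 u + (4-u) * Dint 2 u - (5*u/2) * Dint 4 u = 0 := by
  set gd : ℝ → ℝ := fun t =>
    (Real.sqrt (1-t^2)/Real.sqrt (Sfun u t)) * ((u/2-1) + (4-u)*t^2 - (5*u/2)*t^4) with hgd
  set g : ℝ → ℝ := fun t => t * (Real.sqrt (1-t^2))^3 * Real.sqrt (Sfun u t) with hg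
  have hderiv : ∀ t ∈ Set.Ioo (-1:ℝ) 1, HasDerivAt g (gd t) t := by
    intro t ht
    have ht1 : (0:ℝ) < 1 - t^2 := by
      obtain ⟨h1, h2⟩ := ht; nlinarith
    have hPne : Real.sqrt (1-t^2) ≠ 0 := ne_of_gt (Real.sqrt_pos.mpr ht1)
    have hP : HasDerivAt (fun t : ℝ => Real.sqrt (1-t^2)) ((0-2*t)/(2*Real.sqrt (1-t^2))) t := by
      have h1 : HasDerivAt (fun t : ℝ => 1-t^2) (0-2*t) t := by
        simpa using (hasDerivAt_pow 2 t).const_sub (1:ℝ)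
      exact h1.sqrt (ne_of_gt ht1)
    have hQ : HasDerivAt (fun t : ℝ => Real.sqrt (Sfun u t)) ((u*t)/(2*Real.sqrt (Sfun u t))) t := by
      have h1 : HasDerivAt (fun t : ℝ => Sfun u t) (u*t) t := by
        have := ((hasDerivAt_pow 2 t).const_mul (u/2)).const_add (u/2-1)
        simpa [Sfun] using this.congr_deriv (by ring)
      exact h1.sqrt (ne_of_gt (Sfun_pos hu t))
    have hd : HasDerivAt g
        ((1*(Real.sqrt (1-t^2))^3 + t*(3*(Real.sqrt (1-t^2))^2*((0-2*t)/(2*Real.sqrt (1-t^2)))))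
           * Real.sqrt (Sfun u t)
         + (t*(Real.sqrt (1-t^2))^3)*((u*t)/(2*Real.sqrt (Sfun u t)))) t := by
      exact (((hasDerivAt_id t).mul (hP.pow 3)).mul hQ).congr_deriv (by simp only [id_eq, Pi.mul_apply, Pi.pow_apply]; ring)
    rw [hgd]
    convert hd using 1
    exact (deriv_combine (Real.sq_sqrt ht1.le) (Real.sq_sqrt (Sfun_pos hu t).le) hPne
      (sqrtS_ne hu t)).symm
  have hint : IntervalIntegrable gd volume (-1) 1 := (gd_cont hu).intervalIntegrable _ _
  have hcont : ContinuousOn g (Set.Icc (-1:ℝ) 1) := by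
    apply Continuous.continuousOn
    exact (continuous_id.mul ((Real.continuous_sqrt.comp (by continuity)).pow 3)).mul
      (Real.continuous_sqrt.comp (contSfun u))
  have hftc : ∫ t in (-1:ℝ)..1, gd t = g 1 - g (-1) :=
    intervalIntegral.integral_eq_sub_of_hasDerivAt_of_le (by norm_num) hcont hderiv hint
  have hzero : ∫ t in (-1:ℝ)..1, gd t = 0 := by
    rw [hftc, hg]
    norm_num
  have hsplit : (u/2-1) * Dint 0 u + (4-u) * Dint 2 u - (5*u/2) * Dint 4 u
      = ∫ t in (-1:ℝ)..1, gd t := by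
    unfold Dint
    rw [← intervalIntegral.integral_const_mul, ← intervalIntegral.integral_const_mul,
      ← intervalIntegral.integral_const_mul,
      ← intervalIntegral.integral_add ((intD 0 hu).const_mul _) ((intD 2 hu).const_mul _),
      ← intervalIntegral.integral_sub
        (((intD 0 hu).const_mul _).add ((intD 2 hu).const_mul _)) ((intD 4 hu).const_mul _)]
    apply intervalIntegral.integral_congr
    intro t _
    rw [hgd]
    ring
  rw [hsplit, hzero]
lemma hasDerivAt_Sv (v : ℝ) (t : ℝ) :
    HasDerivAt (fun v : ℝ => Sfun v t) ((1+t^2)/2) v := by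
  have h : HasDerivAt (fun v : ℝ => (1+t^2)/2 * v - 1) ((1+t^2)/2) v := by
    simpa using ((hasDerivAt_id v).const_mul ((1+t^2)/2)).sub_const 1
  have heq : (fun v : ℝ => (1+t^2)/2 * v - 1) = (fun v : ℝ => Sfun v t) := by
    funext v; unfold Sfun; ring
  rwa [heq] at h

lemma hasDerivAt_A (i : ℕ) {u : ℝ} (hu : 2 < u) :
    HasDerivAt (Aint i) ((Dint i u + Dint (i+2) u)/4) u := by
  have hε : (0:ℝ) < (u-2)/2 := by linarith
  have hball : ∀ v ∈ Metric.ball u ((u-2)/2), 2 < v := by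
    intro v hv
    rw [Metric.mem_ball, Real.dist_eq, abs_lt] at hv
    linarith [hv.1]
  have hSlb : ∀ v ∈ Metric.ball u ((u-2)/2), ∀ t : ℝ, (u-2)/4 ≤ Sfun v t := by
    intro v hv t
    rw [Metric.mem_ball, Real.dist_eq, abs_lt] at hv
    have ht : (0:ℝ) ≤ v/2 * t^2 := by nlinarith [sq_nonneg t, hv.1]
    unfold Sfun; nlinarith [hv.1]
  have hsb : (0:ℝ) < Real.sqrt ((u-2)/4) := Real.sqrt_pos.mpr (by linarith)
  have key := intervalIntegral.hasDerivAt_integral_of_dominated_loc_of_deriv_le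
    (𝕜 := ℝ) (μ := volume) (a := (-1:ℝ)) (b := (1:ℝ))
    (F := fun v t => t^i * (Real.sqrt (1-t^2) * Real.sqrt (Sfun v t)))
    (F' := fun v t => t^i * (Real.sqrt (1-t^2) * ((1+t^2)/2 / (2 * Real.sqrt (Sfun v t)))))
    (x₀ := u) (bound := fun _ => 1/(2*Real.sqrt ((u-2)/4))) (Metric.ball_mem_nhds u hε)
    (Filter.Eventually.of_forall (fun v => (contA i v).aestronglyMeasurable))
    ((contA i u).intervalIntegrable _ _)
    (by
      apply Continuous.aestronglyMeasurable
      apply Continuous.mul (by continuity)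
      apply Continuous.mul (Real.continuous_sqrt.comp (by continuity))
      apply Continuous.div (by continuity)
        (continuous_const.mul (Real.continuous_sqrt.comp (contSfun u)))
      intro t
      have := sqrtS_pos hu t
      exact mul_ne_zero two_ne_zero (sqrtS_ne hu t))
    (by
      apply Filter.Eventually.of_forall
      intro t ht v hv
      have hS := hSlb v hv t
      have hsv : Real.sqrt ((u-2)/4) ≤ Real.sqrt (Sfun v t) := Real.sqrt_le_sqrt hS
      have hsvpos : 0 < Real.sqrt (Sfun v t) := lt_of_lt_of_le hsb hsv
      have ht1 : |t| ≤ 1 := by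
        rw [Set.uIoc_of_le (by norm_num : (-1:ℝ) ≤ 1)] at ht
        rw [abs_le]; exact ⟨ht.1.le, ht.2⟩
      have hP1 : Real.sqrt (1-t^2) ≤ 1 := by
        have : Real.sqrt (1-t^2) ≤ Real.sqrt 1 := Real.sqrt_le_sqrt (by nlinarith [sq_nonneg t])
        simpa using this
      have ht2 : t^2 ≤ 1 := by nlinarith [sq_abs t, ht1, abs_nonneg t]
      have hXnn : (0:ℝ) ≤ (1+t^2)/2 / (2 * Real.sqrt (Sfun v t)) :=
        div_nonneg (by positivity) (by positivity)
      have h1 : |t^i * (Real.sqrt (1-t^2) * ((1+t^2)/2 / (2 * Real.sqrt (Sfun v t))))|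
          = |t|^i * (|Real.sqrt (1-t^2)| * |(1+t^2)/2 / (2 * Real.sqrt (Sfun v t))|) := by
        rw [abs_mul, abs_mul, abs_pow]
      rw [Real.norm_eq_abs, h1, abs_of_nonneg (Real.sqrt_nonneg (1-t^2)), abs_of_nonneg hXnn]
      calc |t|^i * (Real.sqrt (1-t^2) * ((1+t^2)/2 / (2 * Real.sqrt (Sfun v t))))
          ≤ 1^i * (1 * ((1+1)/2 / (2 * Real.sqrt ((u-2)/4)))) := by
            gcongr
        _ = 1/(2*Real.sqrt ((u-2)/4)) := by ring)
    (intervalIntegrable_const)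
    (by
      apply Filter.Eventually.of_forall
      intro t ht v hv
      have hv2 := hball v hv
      have hsq : HasDerivAt (fun v : ℝ => Real.sqrt (Sfun v t))
          ((1+t^2)/2 / (2 * Real.sqrt (Sfun v t))) v :=
        (hasDerivAt_Sv v t).sqrt (ne_of_gt (Sfun_pos hv2 t))
      exact (hsq.const_mul (Real.sqrt (1-t^2))).const_mul ((t:ℝ)^i))
  have hval : (∫ t in (-1:ℝ)..1,
      t^i * (Real.sqrt (1-t^2) * ((1+t^2)/2 / (2 * Real.sqrt (Sfun u t)))))
      = (Dint i u + Dint (i+2) u)/4 := by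
    unfold Dint
    rw [← intervalIntegral.integral_add (intD i hu) (intD (i+2) hu)]
    rw [show (∫ t in (-1:ℝ)..1, (t^i * (Real.sqrt (1-t^2) / Real.sqrt (Sfun u t))
        + t^(i+2) * (Real.sqrt (1-t^2) / Real.sqrt (Sfun u t))))/4
      = ∫ t in (-1:ℝ)..1, (t^i * (Real.sqrt (1-t^2) / Real.sqrt (Sfun u t))
        + t^(i+2) * (Real.sqrt (1-t^2) / Real.sqrt (Sfun u t)))/4 from
        (intervalIntegral.integral_div 4 _).symm]
    apply intervalIntegral.integral_congr
    intro t _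
    simp only [div_eq_mul_inv, mul_inv, pow_add]
    ring
  rw [← hval]
  exact key.2
noncomputable def wfun (h : ℝ) : ℝ := 1 + Real.sqrt (1 + 4*h)

lemma w_gt {h : ℝ} (hh : 0 < h) : 2 < wfun h := by
  have h1 : Real.sqrt 1 < Real.sqrt (1+4*h) := Real.sqrt_lt_sqrt (by norm_num) (by linarith)
  rw [Real.sqrt_one] at h1
  unfold wfun; linarith

lemma w_eq_h {h : ℝ} (hh : 0 < h) : h = ((wfun h)^2 - 2*(wfun h))/4 := by
  have h1 : Real.sqrt (1+4*h) ^ 2 = 1 + 4*h := Real.sq_sqrt (by linarith)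
  unfold wfun; nlinarith [h1]

lemma hasDerivAt_w {h : ℝ} (hh : 0 < h) : HasDerivAt wfun (2/(wfun h - 1)) h := by
  have h1 : HasDerivAt (fun h : ℝ => 1 + 4*h) 4 h := by
    simpa using ((hasDerivAt_id h).const_mul (4:ℝ)).const_add 1
  have hne : (1:ℝ) + 4*h ≠ 0 := by positivity
  have h2 := (h1.sqrt hne).const_add 1
  have hw : wfun h - 1 = Real.sqrt (1+4*h) := by unfold wfun; ring
  have heq : (fun h : ℝ => 1 + Real.sqrt (1+4*h)) = wfun := rfl
  rw [heq] at h2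
  refine h2.congr_deriv ?_
  rw [hw]; ring

lemma aext_eq (h : ℝ) : aext h = Real.sqrt (wfun h) := rfl

lemma Iext_eq (i : ℕ) {h : ℝ} (hh : 0 < h) :
    Iext i h = 2 * Real.sqrt (wfun h) ^ (i+2) * Aint i (wfun h) := by
  have hu : 2 < wfun h := w_gt hh
  have hu0 : (0:ℝ) < wfun h := by linarith
  have hapos : 0 < aext h := by rw [aext_eq]; exact Real.sqrt_pos.mpr hu0
  have ha2 : (aext h)^2 = wfun h := by rw [aext_eq]; exact Real.sq_sqrt hu0.le
  unfold Iext
  have hcomp := intervalIntegral.integral_comp_mul_left (a := (-1:ℝ)) (b := 1)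
    (f := fun x => x^i * Real.sqrt (2*h + x^2 - x^4/2)) (ne_of_gt hapos)
  rw [mul_neg_one, mul_one] at hcomp
  have hmain : (∫ x in (-aext h)..(aext h), x^i * Real.sqrt (2*h+x^2-x^4/2))
      = aext h * ∫ t in (-1:ℝ)..1,
          (aext h*t)^i * Real.sqrt (2*h+(aext h*t)^2-(aext h*t)^4/2) := by
    rw [hcomp, smul_eq_mul, ← mul_assoc, mul_inv_cancel₀ (ne_of_gt hapos), one_mul]
  rw [hmain]
  have hcong : (∫ t in (-1:ℝ)..1, (aext h*t)^i * Real.sqrt (2*h+(aext h*t)^2-(aext h*t)^4/2))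
      = ∫ t in (-1:ℝ)..1, Real.sqrt (wfun h) ^ (i+1)
          * (t^i * (Real.sqrt (1-t^2) * Real.sqrt (Sfun (wfun h) t))) := by
    apply intervalIntegral.integral_congr
    intro t ht
    rw [Set.uIcc_of_le (by norm_num : (-1:ℝ) ≤ 1), Set.mem_Icc] at ht
    have ht2 : (0:ℝ) ≤ 1 - t^2 := by nlinarith [ht.1, ht.2]
    have hin : 2*h + (aext h*t)^2 - (aext h*t)^4/2 = wfun h * ((1-t^2) * Sfun (wfun h) t) := by
      have h2h : h = ((wfun h)^2-2*(wfun h))/4 := w_eq_h hh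
      simp only [Sfun]
      linear_combination (t^2 - ((aext h)^2+wfun h)*t^4/2) * ha2 + 2*h2h
    simp only []
    rw [hin, Real.sqrt_mul hu0.le, Real.sqrt_mul ht2, mul_pow, aext_eq]
    ring
  rw [hcong, intervalIntegral.integral_const_mul]
  unfold Aint
  rw [aext_eq]
  ring
lemma pf_algebra (u hv a0 a2 d0 d2 d4 : ℝ) (hune : u - 1 ≠ 0)
    (ha0 : a0 = (u/2-1)*d0 + u/2*d2) (ha2 : a2 = (u/2-1)*d2 + u/2*d4)
    (hR : (u/2-1)*d0 + (4-u)*d2 - 5*u/2*d4 = 0)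
    (hhv : hv = (u^2-2*u)/4) :
    (2*u*a0 = (4/3)*hv*(2*(2/(u-1))*a0 + 2*u*((d0+d2)/4*(2/(u-1))))
       + (1/3)*(2*(2*u*(2/(u-1)))*a2 + 2*u^2*((d2+d4)/4*(2/(u-1))))) ∧
    (2*u^2*a2 = (4/15)*hv*(2*(2/(u-1))*a0 + 2*u*((d0+d2)/4*(2/(u-1))))
       + (4*hv/5+4/15)*(2*(2*u*(2/(u-1)))*a2 + 2*u^2*((d2+d4)/4*(2/(u-1))))) := by
  subst ha0 ha2 hhv
  constructor
  · field_simp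
    linear_combination (8*u) * hR
  · field_simp
    linear_combination (-40*u*(3*u-4)) * hR

theorem picard_fuchs_exterior (h : ℝ) (hh : 0 < h) :
    DifferentiableAt ℝ (Iext 0) h ∧ DifferentiableAt ℝ (Iext 2) h ∧
    Iext 0 h = (4/3) * h * deriv (Iext 0) h + (1/3) * deriv (Iext 2) h ∧
    Iext 2 h = (4/15) * h * deriv (Iext 0) h + (4*h/5 + 4/15) * deriv (Iext 2) h := by
  have hu : 2 < wfun h := w_gt hh
  have hune : wfun h - 1 ≠ 0 := ne_of_gt (by linarith : (0:ℝ) < wfun h - 1)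
  have hw := hasDerivAt_w hh
  have da0 := hasDerivAt_A 0 hu
  have da2 := hasDerivAt_A 2 hu
  have hsq : ∀ h' : ℝ, 0 < h' → Real.sqrt (wfun h') ^ 2 = wfun h' := by
    intro h' hh'
    exact Real.sq_sqrt (by linarith [w_gt hh'])
  have hev0 : Iext 0 =ᶠ[nhds h] (fun h' => 2 * wfun h' * Aint 0 (wfun h')) := by
    filter_upwards [eventually_gt_nhds hh] with h' hh'
    rw [Iext_eq 0 hh']
    norm_num [hsq h' hh']
  have hev2 : Iext 2 =ᶠ[nhds h] (fun h' => 2 * (wfun h')^2 * Aint 2 (wfun h')) := by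
    filter_upwards [eventually_gt_nhds hh] with h' hh'
    rw [Iext_eq 2 hh']
    have : Real.sqrt (wfun h') ^ (2+2) = (wfun h')^2 := by
      rw [show Real.sqrt (wfun h') ^ (2+2) = (Real.sqrt (wfun h')^2)^2 by ring, hsq h' hh']
    rw [this]
  have d0 : HasDerivAt (Iext 0)
      (2*(2/(wfun h - 1)) * Aint 0 (wfun h)
        + 2*wfun h * ((Dint 0 (wfun h) + Dint 2 (wfun h))/4 * (2/(wfun h - 1)))) h := by
    apply HasDerivAt.congr_of_eventuallyEq _ hev0
    exact ((hw.const_mul 2).mul (da0.comp h hw)).congr_deriv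
      (by simp only [Function.comp_apply]; try ring)
  have d2 : HasDerivAt (Iext 2)
      (2*(2*wfun h*(2/(wfun h - 1))) * Aint 2 (wfun h)
        + 2*(wfun h)^2 * ((Dint 2 (wfun h) + Dint 4 (wfun h))/4 * (2/(wfun h - 1)))) h := by
    apply HasDerivAt.congr_of_eventuallyEq _ hev2
    have hw2 : HasDerivAt (fun h' => 2*(wfun h')^2) (2*(2*wfun h*(2/(wfun h - 1)))) h :=
      ((hw.pow 2).const_mul 2).congr_deriv (by ring)
    exact (hw2.mul (da2.comp h hw)).congr_deriv
      (by simp only [Function.comp_apply]; try ring)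
  have e0 : Iext 0 h = 2 * wfun h * Aint 0 (wfun h) := by
    rw [Iext_eq 0 hh]; norm_num [hsq h hh]
  have e2 : Iext 2 h = 2 * (wfun h)^2 * Aint 2 (wfun h) := by
    rw [Iext_eq 2 hh]
    rw [show Real.sqrt (wfun h) ^ (2+2) = (Real.sqrt (wfun h)^2)^2 by ring, hsq h hh]
  have hA0 : Aint 0 (wfun h) = (wfun h/2-1) * Dint 0 (wfun h) + wfun h/2 * Dint 2 (wfun h) :=
    A_eq_D 0 hu
  have hA2 : Aint 2 (wfun h) = (wfun h/2-1) * Dint 2 (wfun h) + wfun h/2 * Dint 4 (wfun h) :=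
    A_eq_D 2 hu
  obtain ⟨g1, g2⟩ := pf_algebra (wfun h) h (Aint 0 (wfun h)) (Aint 2 (wfun h))
    (Dint 0 (wfun h)) (Dint 2 (wfun h)) (Dint 4 (wfun h)) hune hA0 hA2 (R1 hu) (w_eq_h hh)
  exact ⟨d0.differentiableAt, d2.differentiableAt,
    by rw [d0.deriv, d2.deriv, e0]; exact g1,
    by rw [d0.deriv, d2.deriv, e2]; exact g2⟩
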